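/- arXiv:0801.4939 — 7 statements merged into one kernel-verified Lean document; each statement's English description precedes it below -/
import Mathlib

section
/- Let p_1(z_1,...,z_d) be a Laurent polynomial in ℂ[z_1^{±1},...,z_d^{±1}] such that for each j = 1,...,d, substituting z_j → z_j^{-1} changes p_1 to -p_1. Then p_1 is divisible in the Laurent polynomial ring by ∏_{j=1}^d (z_j - z_j^{-1}). -/
/-- Negation of the `j`-th coordinate, as an additive automorphism of `Fin d → ℤ`. -/
def negAt {d : ℕ} (j : Fin d) : (Fin d → ℤ) ≃+ (Fin d → ℤ) where
  toFun v := Function.update v j (-(v j))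
  invFun v := Function.update v j (-(v j))
  left_inv v := by
    ext i
    by_cases h : i = j <;> simp [Function.update_apply, h] <;> ring
  right_inv v := by
    ext i
    by_cases h : i = j <;> simp [Function.update_apply, h] <;> ring
  map_add' u v := by
    ext i
    by_cases h : i = j <;> simp [Function.update_apply, h] <;> ring

/-- The involution `I_j : z_j ↦ z_j⁻¹` of the Laurent polynomial ring
`ℂ[z₁^{±1},…,z_d^{±1}] = ℂ[Fin d → ℤ]`. -/
noncomputable def laurentInv {d : ℕ} (j : Fin d) :
    AddMonoidAlgebra ℂ (Fin d → ℤ) ≃ₐ[ℂ] AddMonoidAlgebra ℂ (Fin d → ℤ) :=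
  AddMonoidAlgebra.domCongr ℂ ℂ (negAt j)

/-!
For every Laurent polynomial `q`, `q - I_j q` is divisible by `z_j - z_j⁻¹`: on a monomial it is
`z^w (z_j^n - z_j^(-n))`. If `I_j q = -q` this difference is `2q`, so `z_j - z_j⁻¹ ∣ q`.
Having split off the factors for a set `S` of coordinates, `p = (∏_{k ∈ S} (z_k - z_k⁻¹)) q`,
the product is fixed by `I_j` for `j ∉ S`; cancelling it in the domain `ℂ[ℤ^d]` shows that
`q` is again anti-invariant under `I_j`, and induction on `S` gives the theorem.
-/

theorem dvd_of_dvd_sub_apply_of_apply_eq_neg {R : Type*} [CommRing R] (h2 : IsUnit (2 : R))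
    {σ : R → R} {f q : R} (hf : f ∣ q - σ q) (hq : σ q = -q) : f ∣ q := by
  rwa [hq, sub_neg_eq_add, ← two_mul, h2.dvd_mul_left] at hf

theorem apply_eq_neg_of_mul {R F : Type*} [CommRing R] [IsDomain R] [FunLike F R R]
    [RingHomClass F R R] (σ : F) {a q : R}
    (ha : a ≠ 0) (hσa : σ a = a) (h : σ (a * q) = -(a * q)) : σ q = -q := by
  rw [map_mul, hσa, ← mul_neg] at h
  exact mul_left_cancel₀ ha h

namespace AddMonoidAlgebra

variable {k ι : Type*} [CommRing k]

theorem single_sub_single_neg_dvd_single_zsmul {G : Type*} [AddCommGroup G] (e : G) (n : ℤ) :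
    (single e 1 - single (-e) 1 : AddMonoidAlgebra k G) ∣
      single (n • e) 1 - single (-(n • e)) 1 := by
  have hpow : ∀ m : ℕ, (single e 1 ^ m - single (-e) 1 ^ m : AddMonoidAlgebra k G) =
      single ((m : ℤ) • e) 1 - single (-((m : ℤ) • e)) 1 := by
    intro m
    simp only [single_pow, one_pow, natCast_zsmul, smul_neg]
  obtain ⟨m, rfl | rfl⟩ := Int.eq_nat_or_neg n
  · rw [← hpow]
    exact sub_dvd_pow_sub_pow _ _ m
  · rw [neg_smul, neg_neg, dvd_sub_comm, ← hpow]
    exact sub_dvd_pow_sub_pow _ _ m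

theorem single_sub_single_neg_dvd_single_piSingle [DecidableEq ι] (j : ι) (n : ℤ) :
    (single (Pi.single j 1) 1 - single (Pi.single j (-1)) 1 : AddMonoidAlgebra k (ι → ℤ)) ∣
      single (Pi.single j n) 1 - single (Pi.single j (-n)) 1 := by
  have hsingle : ∀ c : ℤ, (Pi.single j c : ι → ℤ) = c • Pi.single j 1 := fun c => by
    rw [← Pi.single_smul, smul_eq_mul, mul_one]
  rw [hsingle n, hsingle (-n), hsingle (-1), neg_smul, neg_smul, one_smul]
  exact single_sub_single_neg_dvd_single_zsmul _ n

end AddMonoidAlgebra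

open AddMonoidAlgebra

section Laurent

variable {d : ℕ}

noncomputable def coordSubInv (j : Fin d) : AddMonoidAlgebra ℂ (Fin d → ℤ) :=
  single (Pi.single j 1) 1 - single (Pi.single j (-1)) 1

theorem coordSubInv_ne_zero (j : Fin d) : coordSubInv j ≠ 0 := by
  rw [coordSubInv, sub_ne_zero, Ne, single_left_inj one_ne_zero]
  intro h
  simpa using congrFun h j

theorem negAt_apply (j : Fin d) (v : Fin d → ℤ) : negAt j v = Function.update v j (-(v j)) :=
  rfl

theorem negAt_of_apply_eq_zero {j : Fin d} {v : Fin d → ℤ} (hv : v j = 0) : negAt j v = v := by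
  rw [negAt_apply, hv, neg_zero, ← hv, Function.update_eq_self]

theorem negAt_eq_sub_add_single (j : Fin d) (v : Fin d → ℤ) :
    negAt j v = v - Pi.single j (v j) + Pi.single j (-(v j)) := by
  ext i
  by_cases hi : i = j
  · subst hi; simp [negAt_apply]
  · simp [negAt_apply, hi]

theorem laurentInv_single (j : Fin d) (v : Fin d → ℤ) (c : ℂ) :
    laurentInv j (single v c) = single (negAt j v) c :=
  domCongr_single _ _ _

theorem laurentInv_coordSubInv_of_ne {a j : Fin d} (h : j ≠ a) :
    laurentInv a (coordSubInv j) = coordSubInv j := by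
  rw [coordSubInv, map_sub, laurentInv_single, laurentInv_single,
    negAt_of_apply_eq_zero (Pi.single_eq_of_ne' h _),
    negAt_of_apply_eq_zero (Pi.single_eq_of_ne' h _)]

theorem coordSubInv_dvd_single_sub_single_negAt (j : Fin d) (v : Fin d → ℤ) :
    coordSubInv j ∣ single v 1 - single (negAt j v) 1 := by
  have hfactor : (single v 1 - single (negAt j v) 1 : AddMonoidAlgebra ℂ (Fin d → ℤ)) =
      single (v - Pi.single j (v j)) 1 *
        (single (Pi.single j (v j)) 1 - single (Pi.single j (-(v j))) 1) := by
    rw [mul_sub, single_mul_single, single_mul_single, mul_one, sub_add_cancel,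
      negAt_eq_sub_add_single]
  rw [hfactor]
  exact dvd_mul_of_dvd_right (single_sub_single_neg_dvd_single_piSingle j _) _

theorem coordSubInv_dvd_sub_laurentInv (j : Fin d) (q : AddMonoidAlgebra ℂ (Fin d → ℤ)) :
    coordSubInv j ∣ q - laurentInv j q := by
  induction q using AddMonoidAlgebra.induction_linear with
  | zero => simp
  | add x y hx hy =>
    rw [map_add, add_sub_add_comm]
    exact dvd_add hx hy
  | single v c =>
    have hsmul : ∀ w : Fin d → ℤ, (single w c : AddMonoidAlgebra ℂ (Fin d → ℤ)) =
        c • single w 1 := fun w => by rw [smul_single', mul_one]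
    rw [laurentInv_single, hsmul v, hsmul (negAt j v), ← smul_sub, Algebra.smul_def]
    exact dvd_mul_of_dvd_right (coordSubInv_dvd_single_sub_single_negAt j v) _

theorem coordSubInv_dvd_of_laurentInv_eq_neg {j : Fin d} {q : AddMonoidAlgebra ℂ (Fin d → ℤ)}
    (hq : laurentInv j q = -q) : coordSubInv j ∣ q := by
  have h2 : IsUnit (2 : AddMonoidAlgebra ℂ (Fin d → ℤ)) := by
    simpa only [map_ofNat] using (IsUnit.mk0 (2 : ℂ) two_ne_zero).map (algebraMap ℂ _)
  exact dvd_of_dvd_sub_apply_of_apply_eq_neg h2 (coordSubInv_dvd_sub_laurentInv j q) hq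

theorem prod_coordSubInv_dvd_of_laurentInv_eq_neg (S : Finset (Fin d))
    {p : AddMonoidAlgebra ℂ (Fin d → ℤ)} (hp : ∀ j ∈ S, laurentInv j p = -p) :
    ∏ j ∈ S, coordSubInv j ∣ p := by
  induction S using Finset.induction_on with
  | empty => simp
  | insert a S ha ih =>
    obtain ⟨q, rfl⟩ := ih fun j hj => hp j (Finset.mem_insert_of_mem hj)
    have hinv : laurentInv a (∏ j ∈ S, coordSubInv j) = ∏ j ∈ S, coordSubInv j := by
      rw [map_prod]
      exact Finset.prod_congr rfl fun j hj =>
        laurentInv_coordSubInv_of_ne (ne_of_mem_of_not_mem hj ha)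
    have hq : laurentInv a q = -q :=
      apply_eq_neg_of_mul (laurentInv a)
        (Finset.prod_ne_zero_iff.mpr fun j _ => coordSubInv_ne_zero j) hinv
        (hp a (Finset.mem_insert_self a S))
    rw [Finset.prod_insert ha, mul_comm]
    exact mul_dvd_mul_left _ (coordSubInv_dvd_of_laurentInv_eq_neg hq)

end Laurent

/-- If a Laurent polynomial `p` satisfies `I_j(p) = -p` for every `j`, then `p` is divisible
by `∏_{j=1}^d (z_j - z_j⁻¹)` in the Laurent polynomial ring. -/
theorem antiinvariant_divisible (d : ℕ) (p : AddMonoidAlgebra ℂ (Fin d → ℤ))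
    (h : ∀ j : Fin d, laurentInv j p = -p) :
    (∏ j : Fin d,
        ((AddMonoidAlgebra.single (Pi.single j (1 : ℤ)) (1 : ℂ) : AddMonoidAlgebra ℂ (Fin d → ℤ)) -
          AddMonoidAlgebra.single (Pi.single j (-1 : ℤ)) (1 : ℂ))) ∣ p :=
  prod_coordSubInv_dvd_of_laurentInv_eq_neg (p := p) Finset.univ fun j _ => h j
end

section
/- Let q ∈ (0,1) and let α_0,...,α_{d+2} be nonzero real numbers. The condition that |α_{k+1} α_k^{-1} z_{k+1}^{ε_1} z_k^{ε_2}| < 1 for all ε_1, ε_2 ∈ {-1,1}, all k = 0,...,d, and all (z_1,...,z_d) on the unit torus (|z_j| = 1), with the conventions z_0 = α_0 and z_{d+1} = α_{d+2}, is equivalent to: 0 < |α_{d+1}| < |α_d| < ... < |α_1| < min(1, |α_0|^2) and |α_{d+1}|/|α_d| < |α_{d+2}| < |α_d|/|α_{d+1}|. -/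
/-!
Each factor has modulus `|α_{k+1}/α_k| |z_{k+1}|^{ε₁} |z_k|^{ε₂}`, and the constraints force
`|z_0| = |α_0|`, `|z_j| = 1` for `1 ≤ j ≤ d`, `|z_{d+1}| = |α_{d+2}|`; so the condition only
has to be checked at one modulus profile. For a factor `a b^ε` with `b > 0`, the two signs
say exactly `a < b` and `a b < 1`. At `k = 0` this gives `|α_1| < |α_0|²` and `|α_1| < 1`, for
`0 < k < d` it gives `|α_{k+1}| < |α_k|`, and at `k = d` it gives the two bounds on `|α_{d+2}|`,
whose combination `|α_{d+1}|/|α_d| < |α_d|/|α_{d+1}|` also yields `|α_{d+1}| < |α_d|`.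
-/

lemma forall_le_iff_zero_and_middle_and_self {P : ℕ → Prop} {d : ℕ} (hd : 1 ≤ d) :
    (∀ k ≤ d, P k) ↔ P 0 ∧ (∀ k, 1 ≤ k → k < d → P k) ∧ P d := by
  refine ⟨fun h => ⟨h 0 (Nat.zero_le d), fun k _ hk => h k hk.le, h d le_rfl⟩, ?_⟩
  rintro ⟨h0, hmid, hlast⟩ k hk
  rcases Nat.eq_zero_or_pos k with rfl | hk0
  · exact h0
  rcases hk.eq_or_lt with rfl | hkd
  · exact hlast
  · exact hmid k hk0 hkd

section LinearOrderedField
variable {K : Type*} [Field K] [LinearOrder K] [IsStrictOrderedRing K]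

lemma lt_of_div_lt_div_swap {a b : K} (ha : 0 < a) (hb : 0 < b) (h : a / b < b / a) :
    a < b := by
  rw [div_lt_div_iff₀ hb ha] at h
  exact (mul_self_lt_mul_self_iff ha.le hb.le).mpr h

lemma forall_pm_one_mul_zpow_lt_one_iff {a b : K} (hb : 0 < b) :
    (∀ ε ∈ ({-1, 1} : Set ℤ), a * b ^ ε < 1) ↔ a < b ∧ a * b < 1 := by
  simp [← div_eq_mul_inv, div_lt_one hb]

end LinearOrderedField

lemma norm_ofReal_mul_zpow_mul_zpow (a : ℝ) (u v : ℂ) (m n : ℤ) :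
    ‖(a : ℂ) * u ^ m * v ^ n‖ = |a| * ‖u‖ ^ m * ‖v‖ ^ n := by
  simp [norm_zpow]

lemma forall_mem_pm_one_const {p : Prop} : (∀ _ ∈ ({-1, 1} : Set ℤ), p) ↔ p :=
  ⟨fun h => h 1 (by simp), fun h _ _ => h⟩

section
variable (d : ℕ) (α : ℕ → ℝ)

def torusBasePoint (j : ℕ) : ℂ :=
  if j = 0 then (α 0 : ℂ) else if j = d + 1 then (α (d + 2) : ℂ) else 1

def torusModulus (j : ℕ) : ℝ :=
  if j = 0 then |α 0| else if j = d + 1 then |α (d + 2)| else 1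

def FactorBound (k : ℕ) : Prop :=
  ∀ ε₁ ∈ ({-1, 1} : Set ℤ), ∀ ε₂ ∈ ({-1, 1} : Set ℤ),
    |α (k + 1) / α k| * torusModulus d α (k + 1) ^ ε₁ * torusModulus d α k ^ ε₂ < 1

variable {d α}

lemma norm_eq_torusModulus {z : ℕ → ℂ} (h0 : z 0 = (α 0 : ℂ))
    (hlast : z (d + 1) = (α (d + 2) : ℂ))
    (htorus : ∀ k, 1 ≤ k → k ≤ d → ‖z k‖ = 1) {j : ℕ} (hj : j ≤ d + 1) :
    ‖z j‖ = torusModulus d α j := by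
  unfold torusModulus
  split_ifs with hj0 hjd
  · simp [hj0, h0]
  · simp [hjd, hlast]
  · exact htorus j (by omega) (by omega)

lemma torus_condition_iff_forall_factorBound :
    (∀ z : ℕ → ℂ, z 0 = (α 0 : ℂ) → z (d + 1) = (α (d + 2) : ℂ) →
      (∀ k, 1 ≤ k → k ≤ d → ‖z k‖ = 1) →
      ∀ k ≤ d, ∀ ε₁ ∈ ({-1, 1} : Set ℤ), ∀ ε₂ ∈ ({-1, 1} : Set ℤ),
        ‖((α (k + 1) / α k : ℝ) : ℂ) * z (k + 1) ^ ε₁ * z k ^ ε₂‖ < 1) ↔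
    ∀ k ≤ d, FactorBound d α k := by
  constructor
  · intro H k hk ε₁ hε₁ ε₂ hε₂
    have h0 : torusBasePoint d α 0 = α 0 := by simp [torusBasePoint]
    have hlast : torusBasePoint d α (d + 1) = α (d + 2) := by simp [torusBasePoint]
    have htorus : ∀ k, 1 ≤ k → k ≤ d → ‖torusBasePoint d α k‖ = 1 := fun k hk1 hkd => by
      rw [torusBasePoint, if_neg (by omega), if_neg (by omega), norm_one]
    have := H _ h0 hlast htorus k hk ε₁ hε₁ ε₂ hε₂
    rwa [norm_ofReal_mul_zpow_mul_zpow, norm_eq_torusModulus h0 hlast htorus (by omega),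
      norm_eq_torusModulus h0 hlast htorus (by omega)] at this
  · intro H z h0 hlast htorus k hk ε₁ hε₁ ε₂ hε₂
    rw [norm_ofReal_mul_zpow_mul_zpow, norm_eq_torusModulus h0 hlast htorus (by omega),
      norm_eq_torusModulus h0 hlast htorus (by omega)]
    exact H k hk ε₁ hε₁ ε₂ hε₂

lemma factorBound_zero_iff (hd : 1 ≤ d) (h0 : α 0 ≠ 0) :
    FactorBound d α 0 ↔ |α 1| < min 1 (|α 0| ^ 2) := by
  have h0' : 0 < |α 0| := abs_pos.mpr h0
  have h1 : torusModulus d α 1 = 1 := by rw [torusModulus, if_neg one_ne_zero, if_neg (by omega)]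
  have hmod0 : torusModulus d α 0 = |α 0| := by simp [torusModulus]
  simp only [FactorBound, h1, hmod0, one_zpow, mul_one, abs_div]
  rw [forall_mem_pm_one_const, forall_pm_one_mul_zpow_lt_one_iff h0', lt_min_iff,
    div_mul_cancel₀ _ h0'.ne', div_lt_iff₀ h0', ← sq, and_comm]

lemma factorBound_iff_of_lt {k : ℕ} (hk0 : 1 ≤ k) (hkd : k < d) (hk : α k ≠ 0) :
    FactorBound d α k ↔ |α (k + 1)| < |α k| := by
  have hmod : ∀ j, 1 ≤ j → j ≤ d → torusModulus d α j = 1 := fun j hj1 hjd => by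
    rw [torusModulus, if_neg (by omega), if_neg (by omega)]
  simp only [FactorBound, hmod k hk0 hkd.le, hmod (k + 1) (by omega) hkd, one_zpow, mul_one,
    abs_div]
  rw [forall_mem_pm_one_const, forall_mem_pm_one_const, div_lt_one (abs_pos.mpr hk)]

lemma factorBound_self_iff (hd : 1 ≤ d) (hαd : α d ≠ 0) (hα₁ : α (d + 1) ≠ 0)
    (hα₂ : α (d + 2) ≠ 0) :
    FactorBound d α d ↔
      |α (d + 1)| / |α d| < |α (d + 2)| ∧ |α (d + 2)| < |α d| / |α (d + 1)| := by
  have hmodd : torusModulus d α d = 1 := by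
    rw [torusModulus, if_neg (by omega), if_neg (by omega)]
  have hmod : torusModulus d α (d + 1) = |α (d + 2)| := by simp [torusModulus]
  simp only [FactorBound, hmodd, hmod, one_zpow, mul_one, abs_div]
  simp_rw [forall_mem_pm_one_const]
  rw [forall_pm_one_mul_zpow_lt_one_iff (abs_pos.mpr hα₂), div_mul_eq_mul_div,
    div_lt_one (abs_pos.mpr hαd), ← lt_div_iff₀' (abs_pos.mpr hα₁)]

end

theorem torus_condition_iff_general (d : ℕ) (hd : 1 ≤ d)
    (α : ℕ → ℝ) (hα : ∀ j ≤ d + 2, α j ≠ 0) :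
    (∀ z : ℕ → ℂ, z 0 = (α 0 : ℂ) → z (d + 1) = (α (d + 2) : ℂ) →
      (∀ k, 1 ≤ k → k ≤ d → ‖z k‖ = 1) →
      ∀ k ≤ d, ∀ ε₁ ∈ ({-1, 1} : Set ℤ), ∀ ε₂ ∈ ({-1, 1} : Set ℤ),
        ‖((α (k + 1) / α k : ℝ) : ℂ) * z (k + 1) ^ ε₁ * z k ^ ε₂‖ < 1) ↔
    ((∀ k, 1 ≤ k → k ≤ d → |α (k + 1)| < |α k|) ∧
      0 < |α (d + 1)| ∧ |α 1| < min 1 (|α 0| ^ 2) ∧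
      |α (d + 1)| / |α d| < |α (d + 2)| ∧ |α (d + 2)| < |α d| / |α (d + 1)|) := by
  have hmiddle : (∀ k, 1 ≤ k → k < d → FactorBound d α k) ↔
      ∀ k, 1 ≤ k → k < d → |α (k + 1)| < |α k| :=
    forall_congr' fun k => forall_congr' fun hk0 => forall_congr' fun hkd =>
      factorBound_iff_of_lt hk0 hkd (hα k (by omega))
  rw [torus_condition_iff_forall_factorBound, forall_le_iff_zero_and_middle_and_self hd,
    factorBound_zero_iff hd (hα 0 (by omega)), hmiddle,
    factorBound_self_iff hd (hα d (by omega)) (hα (d + 1) (by omega)) (hα (d + 2) le_rfl)]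
  have hpos : 0 < |α (d + 1)| := abs_pos.mpr (hα (d + 1) (by omega))
  constructor
  · rintro ⟨hfirst, hchain, hlo, hhi⟩
    refine ⟨fun k hk0 hkd => ?_, hpos, hfirst, hlo, hhi⟩
    rcases hkd.eq_or_lt with rfl | hkd
    · exact lt_of_div_lt_div_swap hpos (abs_pos.mpr (hα k (by omega))) (hlo.trans hhi)
    · exact hchain k hk0 hkd
  · rintro ⟨hchain, -, hfirst, hlo, hhi⟩
    exact ⟨hfirst, fun k hk0 hkd => hchain k hk0 hkd.le, hlo, hhi⟩

/-- The torus condition `|α_{k+1} α_k⁻¹ z_{k+1}^{ε₁} z_k^{ε₂}| < 1` (for all `ε₁,ε₂ ∈ {-1,1}`,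
all `k = 0,…,d`, and all `z` on the unit torus, with `z_0 = α_0`, `z_{d+1} = α_{d+2}`)
is equivalent to `0 < |α_{d+1}| < |α_d| < ⋯ < |α_1| < min(1,|α_0|²)` together with
`|α_{d+1}|/|α_d| < |α_{d+2}| < |α_d|/|α_{d+1}|`. -/
theorem torus_condition_iff (d : ℕ) (hd : 1 ≤ d) (q : ℝ) (hq0 : 0 < q) (hq1 : q < 1)
    (α : ℕ → ℝ) (hα : ∀ j ≤ d + 2, α j ≠ 0) :
    (∀ z : ℕ → ℂ, z 0 = (α 0 : ℂ) → z (d + 1) = (α (d + 2) : ℂ) →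
      (∀ k, 1 ≤ k → k ≤ d → ‖z k‖ = 1) →
      ∀ k ≤ d, ∀ ε₁ ∈ ({-1, 1} : Set ℤ), ∀ ε₂ ∈ ({-1, 1} : Set ℤ),
        ‖((α (k + 1) / α k : ℝ) : ℂ) * z (k + 1) ^ ε₁ * z k ^ ε₂‖ < 1) ↔
    ((∀ k, 1 ≤ k → k ≤ d → |α (k + 1)| < |α k|) ∧
      0 < |α (d + 1)| ∧ |α 1| < min 1 (|α 0| ^ 2) ∧
      |α (d + 1)| / |α d| < |α (d + 2)| ∧ |α (d + 2)| < |α d| / |α (d + 1)|) :=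
  torus_condition_iff_general d hd α hα
end

section
/- Define the map f on triples (n, z, α) ∈ ℂ^d × (ℂ*)^d × (ℂ*)^{d+3} (with n taken modulo (2πi/log q)ℤ componentwise, or equivalently working with the variables q^{n_j}) by: q^{ñ_j} = α_{d+1-j} z_{d+1-j} / (α_{d+2-j} z_{d+2-j}) for j=1,...,d (with z_{d+1} := α_{d+2}), z̃_j = (α_{d+2-j}/α_0) q^{n_1+...+n_{d+1-j} - 1/2} for j=1,...,d, α̃_0 = α_0, α̃_j = (α_0 α_{d+1} α_{d+2}/α_{d+2-j}) q^{1/2} for j=1,...,d+1, and α̃_{d+2} = (α_1/α_0) q^{-1/2}. Then f is an involution: applying f twice returns the original triple (with q^{n_j} recovered). -/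
/-!
Write `w_k = α_k z_k` (so `w_{d+1} = α_{d+1} α_{d+2}`) and `P_k = u_1 ⋯ u_k`. The dual variables
are chosen so that `ũ_j = w_{d+1-j} / w_{d+2-j}` telescopes to `ũ_1 ⋯ ũ_k = w_{d+1-k} / w_{d+1}`,
while `α̃_k z̃_k = α_{d+1} α_{d+2} P_{d+1-k}` for `1 ≤ k ≤ d + 1`. Applying the map a second time
therefore turns ratios of the `α̃_k z̃_k` back into `u_j = P_j / P_{j-1}` and the products of the
`ũ_j` back into the `z_j`; on the parameters the map is visibly an involution.
-/

open Finset

theorem prod_Icc_one_div_pred {G₀ : Type*} [CommGroupWithZero G₀] (g : ℕ → G₀) {k : ℕ}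
    (hg : ∀ i ≤ k, g i ≠ 0) : ∏ j ∈ Icc 1 k, g j / g (j - 1) = g k / g 0 := by
  induction k with
  | zero => simp [div_self (hg 0 le_rfl)]
  | succ k ih =>
    rw [prod_Icc_succ_top (by omega), ih fun i hi => hg i (by omega), Nat.add_sub_cancel,
      div_mul_div_cancel₀' (hg k (by omega))]

section Duality

variable {K : Type*} [Field K] {d : ℕ} {s : K} {α z u tα tz tu pα : ℕ → K}

theorem dual_param_involutive (hs : s ≠ 0) (hα : ∀ j ≤ d + 2, α j ≠ 0)
    (htα0 : tα 0 = α 0)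
    (htα : ∀ j, 1 ≤ j → j ≤ d + 1 → tα j = α 0 * α (d + 1) * α (d + 2) * s / α (d + 2 - j))
    (htαtop : tα (d + 2) = α 1 / (α 0 * s))
    (hpα0 : pα 0 = tα 0)
    (hpα : ∀ j, 1 ≤ j → j ≤ d + 1 →
      pα j = tα 0 * tα (d + 1) * tα (d + 2) * s / tα (d + 2 - j))
    (hpαtop : pα (d + 2) = tα 1 / (tα 0 * s)) :
    ∀ j ≤ d + 2, pα j = α j := by
  have hα0 := hα 0 (by omega)
  have hα1 := hα 1 (by omega)
  have hαd1 := hα (d + 1) (by omega)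
  have hαd2 := hα (d + 2) (by omega)
  intro j hj
  obtain rfl | hj1 := Nat.eq_zero_or_pos j
  · rw [hpα0, htα0]
  obtain rfl | hjd := eq_or_lt_of_le hj
  · rw [hpαtop, htα0, htα 1 le_rfl (by omega), show d + 2 - 1 = d + 1 by omega]
    field_simp
  have hαj := hα j hj
  rw [hpα j hj1 (by omega), htα0, htα (d + 1) (by omega) le_rfl, htαtop,
    htα (d + 2 - j) (by omega) (by omega), show d + 2 - (d + 1) = 1 by omega,
    show d + 2 - (d + 2 - j) = j by omega]
  field_simp

theorem dual_param_mul_dual_var (hs : s ≠ 0) (hα : ∀ j ≤ d + 2, α j ≠ 0)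
    (htz : ∀ j, 1 ≤ j → j ≤ d →
      tz j = α (d + 2 - j) / α 0 * (∏ i ∈ Icc 1 (d + 1 - j), u i) / s)
    (htα : ∀ j, 1 ≤ j → j ≤ d + 1 → tα j = α 0 * α (d + 1) * α (d + 2) * s / α (d + 2 - j))
    (htαtop : tα (d + 2) = α 1 / (α 0 * s))
    (htztop : tz (d + 1) = tα (d + 2)) {k : ℕ} (hk1 : 1 ≤ k) (hk2 : k ≤ d + 1) :
    tα k * tz k = α (d + 1) * α (d + 2) * ∏ i ∈ Icc 1 (d + 1 - k), u i := by
  have hα0 := hα 0 (by omega)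
  obtain rfl | hkd := eq_or_lt_of_le hk2
  · have hα1 := hα 1 (by omega)
    rw [htztop, htαtop, htα (d + 1) hk1 le_rfl, show d + 2 - (d + 1) = 1 by omega, Nat.sub_self,
      Icc_eq_empty_of_lt zero_lt_one, prod_empty]
    field_simp
  · have hαk := hα (d + 2 - k) (by omega)
    rw [htα k hk1 hk2, htz k hk1 (by omega)]
    field_simp

theorem prod_Icc_dual_disc (hα : ∀ j ≤ d + 2, α j ≠ 0) (hz : ∀ j, 1 ≤ j → j ≤ d → z j ≠ 0)
    (hztop : z (d + 1) = α (d + 2))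
    (htu : ∀ j, 1 ≤ j → j ≤ d →
      tu j = α (d + 1 - j) * z (d + 1 - j) / (α (d + 2 - j) * z (d + 2 - j)))
    {k : ℕ} (hk : k ≤ d) :
    ∏ i ∈ Icc 1 k, tu i = α (d + 1 - k) * z (d + 1 - k) / (α (d + 1) * α (d + 2)) := by
  set w : ℕ → K := fun i => α (d + 1 - i) * z (d + 1 - i) with hw_def
  have hw : ∀ i ≤ k, w i ≠ 0 := by
    intro i hi
    refine mul_ne_zero (hα _ (by omega)) ?_
    obtain rfl | hi0 := Nat.eq_zero_or_pos i
    · simpa [hztop] using hα (d + 2) le_rfl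
    · exact hz _ (by omega) (by omega)
  calc ∏ i ∈ Icc 1 k, tu i = ∏ i ∈ Icc 1 k, w i / w (i - 1) := by
        refine prod_congr rfl fun j hj => ?_
        rw [mem_Icc] at hj
        rw [htu j hj.1 (by omega), hw_def, show d + 2 - j = d + 1 - (j - 1) by omega]
    _ = w k / w 0 := prod_Icc_one_div_pred w hw
    _ = α (d + 1 - k) * z (d + 1 - k) / (α (d + 1) * α (d + 2)) := by
        simp only [hw_def, Nat.sub_zero, hztop]

end Duality

theorem duality_involution_general (d : ℕ) (s : ℂ) (hs : s ≠ 0)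
    (α z u tα tz tu pα pz pu : ℕ → ℂ)
    (hα : ∀ j ≤ d + 2, α j ≠ 0)
    (hz : ∀ j, 1 ≤ j → j ≤ d → z j ≠ 0)
    (hu : ∀ j, 1 ≤ j → j ≤ d → u j ≠ 0)
    (hztop : z (d + 1) = α (d + 2))
    -- the tilde (dual) variables
    (htu : ∀ j, 1 ≤ j → j ≤ d →
      tu j = α (d + 1 - j) * z (d + 1 - j) / (α (d + 2 - j) * z (d + 2 - j)))
    (htz : ∀ j, 1 ≤ j → j ≤ d →
      tz j = α (d + 2 - j) / α 0 * (∏ i ∈ Finset.Icc 1 (d + 1 - j), u i) / s)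
    (htα0 : tα 0 = α 0)
    (htα : ∀ j, 1 ≤ j → j ≤ d + 1 → tα j = α 0 * α (d + 1) * α (d + 2) * s / α (d + 2 - j))
    (htαtop : tα (d + 2) = α 1 / (α 0 * s))
    (htztop : tz (d + 1) = tα (d + 2))
    -- the image of the tilde variables under the same map
    (hpu : ∀ j, 1 ≤ j → j ≤ d →
      pu j = tα (d + 1 - j) * tz (d + 1 - j) / (tα (d + 2 - j) * tz (d + 2 - j)))
    (hpz : ∀ j, 1 ≤ j → j ≤ d →
      pz j = tα (d + 2 - j) / tα 0 * (∏ i ∈ Finset.Icc 1 (d + 1 - j), tu i) / s)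
    (hpα0 : pα 0 = tα 0)
    (hpα : ∀ j, 1 ≤ j → j ≤ d + 1 →
      pα j = tα 0 * tα (d + 1) * tα (d + 2) * s / tα (d + 2 - j))
    (hpαtop : pα (d + 2) = tα 1 / (tα 0 * s)) :
    (∀ j, 1 ≤ j → j ≤ d → pu j = u j ∧ pz j = z j) ∧ (∀ j ≤ d + 2, pα j = α j) := by
  have hP : ∀ k, 1 ≤ k → k ≤ d + 1 →
      tα k * tz k = α (d + 1) * α (d + 2) * ∏ i ∈ Icc 1 (d + 1 - k), u i :=
    fun k => dual_param_mul_dual_var hs hα htz htα htαtop htztop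
  refine ⟨fun j hj1 hj2 => ⟨?_, ?_⟩, dual_param_involutive hs hα htα0 htα htαtop hpα0 hpα hpαtop⟩
  · obtain ⟨m, rfl⟩ : ∃ m, j = m + 1 := ⟨j - 1, by omega⟩
    have hprod : ∏ i ∈ Icc 1 m, u i ≠ 0 := prod_ne_zero_iff.2 fun i hi => by
      rw [mem_Icc] at hi
      exact hu i hi.1 (by omega)
    rw [hpu _ hj1 hj2, hP _ (by omega) (by omega), hP _ (by omega) (by omega),
      show d + 1 - (d + 1 - (m + 1)) = m + 1 by omega, show d + 1 - (d + 2 - (m + 1)) = m by omega,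
      mul_div_mul_left _ _ (mul_ne_zero (hα _ (by omega)) (hα _ le_rfl)),
      prod_Icc_succ_top (by omega), mul_div_cancel_left₀ _ hprod]
  · have hαj := hα j (by omega)
    have hzj := hz j hj1 hj2
    have hα0 := hα 0 (by omega)
    have hαd1 := hα (d + 1) (by omega)
    have hαd2 := hα (d + 2) le_rfl
    rw [hpz j hj1 hj2, prod_Icc_dual_disc hα hz hztop htu (by omega : d + 1 - j ≤ d), htα0,
      htα (d + 2 - j) (by omega) (by omega), show d + 2 - (d + 2 - j) = j by omega,
      show d + 1 - (d + 1 - j) = j by omega]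
    field_simp

/-- The duality map `f : (n, z, α) ↦ (ñ, z̃, α̃)` for multivariable Askey-Wilson polynomials
is an involution. Here the discrete variables are encoded by `u_j = q^{n_j}`, `s = q^{1/2}`
is a fixed square root of `q`, the convention `z_{d+1} = α_{d+2}` (and its tilde analogue)
is in force, and `(u', z', α')` denotes the image of `(ũ, z̃, α̃)` under the same map;
the conclusion is `(u', z', α') = (u, z, α)`. -/
theorem duality_involution (d : ℕ) (hd : 1 ≤ d) (s : ℂ) (hs : s ≠ 0)
    (α z u tα tz tu pα pz pu : ℕ → ℂ)
    (hα : ∀ j ≤ d + 2, α j ≠ 0)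
    (hz : ∀ j, 1 ≤ j → j ≤ d → z j ≠ 0)
    (hu : ∀ j, 1 ≤ j → j ≤ d → u j ≠ 0)
    (hztop : z (d + 1) = α (d + 2))
    -- the tilde (dual) variables
    (htu : ∀ j, 1 ≤ j → j ≤ d →
      tu j = α (d + 1 - j) * z (d + 1 - j) / (α (d + 2 - j) * z (d + 2 - j)))
    (htz : ∀ j, 1 ≤ j → j ≤ d →
      tz j = α (d + 2 - j) / α 0 * (∏ i ∈ Finset.Icc 1 (d + 1 - j), u i) / s)
    (htα0 : tα 0 = α 0)
    (htα : ∀ j, 1 ≤ j → j ≤ d + 1 → tα j = α 0 * α (d + 1) * α (d + 2) * s / α (d + 2 - j))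
    (htαtop : tα (d + 2) = α 1 / (α 0 * s))
    (htztop : tz (d + 1) = tα (d + 2))
    -- the image of the tilde variables under the same map
    (hpu : ∀ j, 1 ≤ j → j ≤ d →
      pu j = tα (d + 1 - j) * tz (d + 1 - j) / (tα (d + 2 - j) * tz (d + 2 - j)))
    (hpz : ∀ j, 1 ≤ j → j ≤ d →
      pz j = tα (d + 2 - j) / tα 0 * (∏ i ∈ Finset.Icc 1 (d + 1 - j), tu i) / s)
    (hpα0 : pα 0 = tα 0)
    (hpα : ∀ j, 1 ≤ j → j ≤ d + 1 →
      pα j = tα 0 * tα (d + 1) * tα (d + 2) * s / tα (d + 2 - j))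
    (hpαtop : pα (d + 2) = tα 1 / (tα 0 * s)) :
    (∀ j, 1 ≤ j → j ≤ d → pu j = u j ∧ pz j = z j) ∧ (∀ j ≤ d + 2, pα j = α j) :=
  duality_involution_general d s hs α z u tα tz tu pα pz pu hα hz hu hztop htu htz htα0 htα htαtop
    htztop hpu hpz hpα0 hpα hpαtop
end

section
/- Let a ∈ ℂ, q ∈ ℂ* and let n, ñ ∈ ℕ^d with partial sums N_k, Ñ_k (N_0 = Ñ_0 = 0). Suppose |n| = N_d and |ñ| = Ñ_d. Then ∏_{j=1}^d (a q^{N_{j-1} + Ñ_{d+1-j}} ; q)_{n_j} / ∏_{j=1}^d (a q^{Ñ_{j-1} + N_{d+1-j}} ; q)_{ñ_j} = (a;q)_{|n|} / (a;q)_{|ñ|}, provided all the denominators are nonzero. Equivalently as an identity in ℂ: ∏_{j=1}^d (a q^{N_{j-1}+Ñ_{d+1-j}};q)_{n_j} · (a;q)_{|ñ|} = ∏_{j=1}^d (a q^{Ñ_{j-1}+N_{d+1-j}};q)_{ñ_j} · (a;q)_{|n|}. -/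
/-!
Write `T j = N_j + Ñ_{d-j}`. The `j`-th factor on the left, `(a q^{N_{j-1} + Ñ_{d+1-j}}; q)_{n_j}`,
extends `(a;q)_{T_{j-1}}` to `(a;q)_{N_j + Ñ_{d+1-j}}`, and the `(d+1-j)`-th factor on the right,
`(a q^{Ñ_{d-j} + N_j}; q)_{ñ_{d+1-j}}`, extends `(a;q)_{T_j}` to the same symbol. Hence the ratio
of these two factors is `(a;q)_{T_j} / (a;q)_{T_{j-1}}`, and the product over `j` telescopes to
`(a;q)_{T_d} / (a;q)_{T_0} = (a;q)_{|n|} / (a;q)_{|ñ|}`.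
-/

/-- The finite q-Pochhammer symbol `(a;q)_k = ∏_{j=0}^{k-1} (1 - a q^j)`. -/
noncomputable def qPoch (q a : ℂ) (k : ℕ) : ℂ :=
  ∏ j ∈ Finset.range k, (1 - a * q ^ j)

open Finset

namespace Finset

theorem prod_Icc_one_reflect {M : Type*} [CommMonoid M] (f : ℕ → M) (d : ℕ) :
    ∏ j ∈ Icc 1 d, f (d + 1 - j) = ∏ j ∈ Icc 1 d, f j := by
  rw [← Ico_add_one_right_eq_Icc, prod_Ico_reflect f 1 (Nat.le_succ _)]
  simp

theorem prod_Icc_mul_eq_prod_Icc_mul_of_telescoping {M : Type*} [CommMonoid M]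
    (f L R : ℕ → M) (d : ℕ) (h : ∀ j < d, f j * L (j + 1) = f (j + 1) * R (j + 1)) :
    (∏ j ∈ Icc 1 d, L j) * f 0 = (∏ j ∈ Icc 1 d, R j) * f d := by
  induction d with
  | zero => simp
  | succ d ih =>
    rw [prod_Icc_succ_top (by omega), prod_Icc_succ_top (by omega), mul_right_comm,
      ih fun j hj => h j (by omega), mul_assoc, h d d.lt_succ_self]
    ac_rfl

end Finset

theorem qPoch_add (q a : ℂ) (m k : ℕ) :
    qPoch q a (m + k) = qPoch q a m * qPoch q (a * q ^ m) k := by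
  simp only [qPoch, prod_range_add, pow_add, mul_assoc]

/-- Both sides are `(a;q)_{m+u+t+v}`. -/
theorem qPoch_mul_qPoch_eq_qPoch_mul_qPoch (q a : ℂ) (m u t v : ℕ) :
    qPoch q a (m + (t + v)) * qPoch q (a * q ^ (m + (t + v))) u =
      qPoch q a (m + u + t) * qPoch q (a * q ^ (t + (m + u))) v := by
  rw [← qPoch_add, Nat.add_comm t (m + u), ← qPoch_add]
  congr 1
  omega

theorem qPoch_telescoping_general (d : ℕ) (q a : ℂ) (n nt : ℕ → ℕ) :
    (∏ j ∈ Finset.Icc 1 d,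
        qPoch q (a * q ^ ((∑ i ∈ Finset.Icc 1 (j - 1), n i) +
          (∑ i ∈ Finset.Icc 1 (d + 1 - j), nt i))) (n j)) *
      qPoch q a (∑ i ∈ Finset.Icc 1 d, nt i) =
    (∏ j ∈ Finset.Icc 1 d,
        qPoch q (a * q ^ ((∑ i ∈ Finset.Icc 1 (j - 1), nt i) +
          (∑ i ∈ Finset.Icc 1 (d + 1 - j), n i))) (nt j)) *
      qPoch q a (∑ i ∈ Finset.Icc 1 d, n i) := by
  let f : ℕ → ℂ := fun j => qPoch q a ((∑ i ∈ Icc 1 j, n i) + ∑ i ∈ Icc 1 (d - j), nt i)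
  have h0 : qPoch q a (∑ i ∈ Icc 1 d, nt i) = f 0 := by simp [f]
  have hd : qPoch q a (∑ i ∈ Icc 1 d, n i) = f d := by simp [f]
  rw [h0, hd]
  -- pair the `j`-th factor on the left with the `(d+1-j)`-th factor on the right
  conv_rhs => rw [← prod_Icc_one_reflect]
  refine prod_Icc_mul_eq_prod_Icc_mul_of_telescoping f _ _ d fun j hj => ?_
  obtain ⟨k, rfl⟩ : ∃ k, d = j + 1 + k := ⟨d - (j + 1), by omega⟩
  simp only [f, Nat.add_sub_cancel, show j + 1 + k + 1 - (j + 1) = k + 1 by omega,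
    show j + 1 + k - j = k + 1 by omega, show j + 1 + k - (j + 1) = k by omega,
    show j + 1 + k + 1 - (k + 1) = j + 1 by omega, sum_Icc_succ_top (Nat.le_add_left 1 _)]
  exact qPoch_mul_qPoch_eq_qPoch_mul_qPoch q a _ _ _ _

/-- Telescoping identity:
`∏_{j=1}^d (a q^{N_{j-1}+Ñ_{d+1-j}};q)_{n_j} ⋅ (a;q)_{|ñ|}
  = ∏_{j=1}^d (a q^{Ñ_{j-1}+N_{d+1-j}};q)_{ñ_j} ⋅ (a;q)_{|n|}`. -/
theorem qPoch_telescoping (d : ℕ) (q a : ℂ) (hq : q ≠ 0) (n nt : ℕ → ℕ) :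
    (∏ j ∈ Finset.Icc 1 d,
        qPoch q (a * q ^ ((∑ i ∈ Finset.Icc 1 (j - 1), n i) +
          (∑ i ∈ Finset.Icc 1 (d + 1 - j), nt i))) (n j)) *
      qPoch q a (∑ i ∈ Finset.Icc 1 d, nt i) =
    (∏ j ∈ Finset.Icc 1 d,
        qPoch q (a * q ^ ((∑ i ∈ Finset.Icc 1 (j - 1), nt i) +
          (∑ i ∈ Finset.Icc 1 (d + 1 - j), n i))) (nt j)) *
      qPoch q a (∑ i ∈ Finset.Icc 1 d, n i) :=
  qPoch_telescoping_general d q a n nt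
end

section
/- Let q be a complex number that is not a root of unity and nonzero, and M ∈ ℕ. Order the multi-indices ν, n ∈ ℕ^d with |ν|, |n| ≤ M by any total order refining the grading by |·| (i.e., ν comes before μ whenever |ν| < |μ|), using the same order for rows and columns. Then the matrix G = (g_{ν,n}) with g_{ν,n} = 2^{-|n|} ∏_{j=1}^d (q^{n_j-ν_j+1};q)_{ν_j} satisfies: g_{ν,n} ≠ 0 iff ν_j ≤ n_j for all j; in particular g_{ν,ν} ≠ 0 and g_{ν,n} = 0 whenever |n| ≤ |ν| and n ≠ ν, so G is upper triangular. Consequently det G = ∏_ν g_{ν,ν} ≠ 0. -/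
/-- The finite index set of multi-indices `{n ∈ ℕ^d : |n| ≤ M}`. -/
noncomputable instance multiIndexFintype (d M : ℕ) :
    Fintype {v : Fin d → ℕ // ∑ j, v j ≤ M} :=
  Fintype.ofInjective
    (fun v : {v : Fin d → ℕ // ∑ j, v j ≤ M} =>
      fun j : Fin d => (⟨v.1 j, Nat.lt_succ_of_le (le_trans
        (Finset.single_le_sum (fun i _ => Nat.zero_le (v.1 i)) (Finset.mem_univ j))
        v.2)⟩ : Fin (M + 1)))
    (by
      intro a b h
      apply Subtype.ext
      funext j
      exact congrArg Fin.val (congrFun h j))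

lemma qpoch_ne_zero_iff (q : ℂ) (hq : q ≠ 0)
    (hroot : ∀ m : ℕ, 1 ≤ m → q ^ m ≠ 1) (a b : ℕ) :
    qPoch q (q ^ ((b : ℤ) - (a : ℤ) + 1)) a ≠ 0 ↔ a ≤ b := by
  unfold qPoch
  rw [Finset.prod_ne_zero_iff]
  have hcomb : ∀ j : ℕ, q ^ ((b : ℤ) - (a : ℤ) + 1) * q ^ j
      = q ^ ((b : ℤ) - (a : ℤ) + 1 + j) := by
    intro j
    rw [← zpow_natCast q j, ← zpow_add₀ hq]
  constructor
  · intro h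
    by_contra hab
    push_neg at hab
    have hj : a - 1 - b < a := by omega
    have h0 := h (a - 1 - b) (Finset.mem_range.mpr hj)
    apply h0
    rw [hcomb, sub_eq_zero]
    have : (b : ℤ) - (a : ℤ) + 1 + ((a - 1 - b : ℕ) : ℤ) = 0 := by omega
    rw [this, zpow_zero]
  · intro hab j hj
    rw [hcomb, sub_ne_zero]
    have hm : (b : ℤ) - (a : ℤ) + 1 + (j : ℤ) = ((b - a + 1 + j : ℕ) : ℤ) := by
      rw [Nat.cast_add, Nat.cast_add, Nat.cast_sub hab]
      ring
    rw [hm, zpow_natCast]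
    have h1 : q ^ (b - a + 1 + j) ≠ 1 := hroot _ (by omega)
    exact fun h => h1 h.symm

/-- The matrix `g_{ν,n} = 2^{-|n|} ∏_j (q^{n_j-ν_j+1};q)_{ν_j}` on multi-indices of degree
at most `M` satisfies: `g_{ν,n} ≠ 0` iff `ν_j ≤ n_j` for all `j`; in particular the
diagonal entries are nonzero and `g_{ν,n} = 0` whenever `|n| ≤ |ν|` and `n ≠ ν`
(triangularity with respect to any total order refining the grading by total degree);
consequently `det G = ∏_ν g_{ν,ν} ≠ 0`. -/
theorem det_g_ne_zero (d M : ℕ) (q : ℂ) (hq : q ≠ 0)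
    (hroot : ∀ m : ℕ, 1 ≤ m → q ^ m ≠ 1) :
    let g : {v : Fin d → ℕ // ∑ j, v j ≤ M} → {v : Fin d → ℕ // ∑ j, v j ≤ M} → ℂ :=
      fun ν n => (∏ j, qPoch q (q ^ ((n.1 j : ℤ) - (ν.1 j : ℤ) + 1)) (ν.1 j)) /
        2 ^ (∑ j, n.1 j)
    (∀ ν n, g ν n ≠ 0 ↔ ∀ j, ν.1 j ≤ n.1 j) ∧
    (∀ ν, g ν ν ≠ 0) ∧
    (∀ ν n, (∑ j, n.1 j) ≤ (∑ j, ν.1 j) → n ≠ ν → g ν n = 0) ∧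
    Matrix.det (Matrix.of g) = ∏ ν, g ν ν ∧
    Matrix.det (Matrix.of g) ≠ 0 := by
  intro g
  have hg : ∀ ν n, g ν n = (∏ j, qPoch q (q ^ ((n.1 j : ℤ) - (ν.1 j : ℤ) + 1)) (ν.1 j)) /
      2 ^ (∑ j, n.1 j) := fun ν n => rfl
  have h2 : ∀ n : {v : Fin d → ℕ // ∑ j, v j ≤ M}, (2 : ℂ) ^ (∑ j, n.1 j) ≠ 0 :=
    fun n => pow_ne_zero _ two_ne_zero
  have hiff : ∀ ν n, g ν n ≠ 0 ↔ ∀ j, ν.1 j ≤ n.1 j := by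
    intro ν n
    rw [hg, div_ne_zero_iff, and_iff_left (h2 n), Finset.prod_ne_zero_iff]
    exact ⟨fun h j => (qpoch_ne_zero_iff q hq hroot _ _).mp (h j (Finset.mem_univ j)),
      fun h j _ => (qpoch_ne_zero_iff q hq hroot _ _).mpr (h j)⟩
  have hdiag : ∀ ν, g ν ν ≠ 0 := fun ν => (hiff ν ν).mpr fun j => le_rfl
  have htri : ∀ ν n, (∑ j, n.1 j) ≤ (∑ j, ν.1 j) → n ≠ ν → g ν n = 0 := by
    intro ν n hle hne
    by_contra h
    have hpt := (hiff ν n).mp h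
    have heq : n = ν := by
      apply Subtype.ext; funext j
      by_contra hj
      have hlt : ν.1 j < n.1 j := lt_of_le_of_ne (hpt j) (Ne.symm hj)
      have := Finset.sum_lt_sum (fun i (_ : i ∈ Finset.univ) => hpt i)
        ⟨j, Finset.mem_univ j, hlt⟩
      omega
    exact hne heq
  refine ⟨hiff, hdiag, htri, ?_⟩
  classical
  let e := Fintype.equivFin {v : Fin d → ℕ // ∑ j, v j ≤ M}
  let N := Fintype.card {v : Fin d → ℕ // ∑ j, v j ≤ M}
  let b : {v : Fin d → ℕ // ∑ j, v j ≤ M} → ℕ := fun ν => (∑ j, ν.1 j) * N + (e ν : ℕ)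
  have hbval : ∀ ν, b ν = (∑ j, ν.1 j) * N + (e ν : ℕ) := fun _ => rfl
  have hkey : ∀ x y, b x < b y → (∑ j, x.1 j) ≤ (∑ j, y.1 j) := by
    intro x y hxy
    by_contra hgt
    push_neg at hgt
    have hy : (e y : ℕ) < N := (e y).isLt
    have : b y < b x := by
      rw [hbval, hbval]
      calc (∑ j, y.1 j) * N + (e y : ℕ) < ((∑ j, y.1 j) + 1) * N := by nlinarith
        _ ≤ (∑ j, x.1 j) * N := Nat.mul_le_mul_right N hgt
        _ ≤ _ := Nat.le_add_right _ _
    exact absurd hxy (Nat.lt_asymm this)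
  have hbinj : Function.Injective b := by
    intro x y hxy
    have h1 := hkey x y
    have h2' := hkey y x
    have hsum : (∑ j, x.1 j) = (∑ j, y.1 j) := by
      rcases Nat.lt_trichotomy (b x) (b y) with h | h | h
      · omega
      · rw [hbval, hbval] at h
        have hx : (e x : ℕ) < N := (e x).isLt
        have hy : (e y : ℕ) < N := (e y).isLt
        nlinarith [Nat.lt_or_ge (∑ j, x.1 j) (∑ j, y.1 j)]
      · omega
    have : (e x : ℕ) = (e y : ℕ) := by
      rw [hbval, hbval, hsum] at hxy
      exact Nat.add_left_cancel hxy
    exact e.injective (Fin.ext this)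
  letI instLO : LinearOrder {v : Fin d → ℕ // ∑ j, v j ≤ M} := LinearOrder.lift' b hbinj
  have hblock : @Matrix.BlockTriangular _ _ ℂ instLO.toLT _ (Matrix.of g) id := by
    intro ν n hlt
    have hb : b n < b ν := hlt
    exact htri ν n (hkey n ν hb) (fun h => absurd (congrArg b h) (Nat.ne_of_lt hb))
  have hdet : Matrix.det (Matrix.of g) = ∏ ν, g ν ν :=
    Matrix.det_of_upperTriangular hblock
  refine ⟨hdet, ?_⟩
  rw [hdet]
  exact Finset.prod_ne_zero_iff.mpr fun ν _ => hdiag ν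
end

section
/- Let q ∈ ℂ*, z ∈ ℂ* and ν ∈ ℕ. With x(z) = (z+z^{-1})/2 and the divided-difference operator D_z = z^{-1}(1 - E_z) where E_z f(z) = f(qz), one has D_z^ν (x^n) = 2^{-n} (q^{n-ν+1};q)_ν z^{n-ν} + (lower order terms in z), meaning D_z^ν(x^n) - 2^{-n}(q^{n-ν+1};q)_ν z^{n-ν} is a Laurent polynomial whose monomials z^k all have k < n - ν. -/
/-- The q-scaling operator `z ↦ qz` on Laurent polynomials `ℂ[z,z⁻¹] = ℂ[ℤ]`:
it sends the monomial `c zᵐ` to `c qᵐ zᵐ`. -/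
noncomputable def qScale (q : ℂ) (f : AddMonoidAlgebra ℂ ℤ) : AddMonoidAlgebra ℂ ℤ :=
  f.coeff.sum fun m c => AddMonoidAlgebra.single m (c * q ^ m)

/-- The divided-difference operator `D_z = z⁻¹(1 - E_z)`, i.e. `(D_z f)(z) = (f(z) - f(qz))/z`. -/
noncomputable def Dop (q : ℂ) (f : AddMonoidAlgebra ℂ ℤ) : AddMonoidAlgebra ℂ ℤ :=
  AddMonoidAlgebra.single (-1 : ℤ) (1 : ℂ) * (f - qScale q f)

/-! `D_z` multiplies the coefficient of `z^(k+1)` by `1 - q^(k+1)` and moves it to `z^k`, so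
`D_z^ν` sends the coefficient of `z^(k+ν)` to `z^k` with the factor `∏_{i<ν} (1 - q^(k+1+i))`.
The top monomial of `x^n` is `2^{-n} zⁿ`, and at `k = n - ν` that factor is `(q^{n-ν+1};q)_ν`. -/

open AddMonoidAlgebra

section PowTwoTerm

variable {R : Type*} [Semiring R] (a : R)

lemma coeff_mul_single_one_add_single_neg_one (f : AddMonoidAlgebra R ℤ) (k : ℤ) :
    (f * (single 1 a + single (-1) a)).coeff k = f.coeff (k - 1) * a + f.coeff (k + 1) * a := by
  rw [mul_add, coeff_add, Finsupp.add_apply, coeff_mul_single_apply, coeff_mul_single_apply,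
    ← sub_eq_add_neg, neg_neg]

lemma coeff_pow_single_one_add_single_neg_one_of_lt {n : ℕ} {k : ℤ} (hk : (n : ℤ) < k) :
    ((single 1 a + single (-1) a : AddMonoidAlgebra R ℤ) ^ n).coeff k = 0 := by
  induction n generalizing k with
  | zero =>
    rw [pow_zero, one_def, coeff_single, Finsupp.single_eq_of_ne]
    omega
  | succ n ih =>
    rw [pow_succ, coeff_mul_single_one_add_single_neg_one, ih (by omega), ih (by omega),
      zero_mul, add_zero]

lemma coeff_pow_single_one_add_single_neg_one_self (n : ℕ) :
    ((single 1 a + single (-1) a : AddMonoidAlgebra R ℤ) ^ n).coeff n = a ^ n := by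
  induction n with
  | zero => rw [pow_zero, pow_zero, one_def, coeff_single, Nat.cast_zero, Finsupp.single_eq_same]
  | succ n ih =>
    rw [pow_succ, coeff_mul_single_one_add_single_neg_one, Nat.cast_succ, add_sub_cancel_right, ih,
      coeff_pow_single_one_add_single_neg_one_of_lt a (by omega), zero_mul, add_zero, pow_succ]

end PowTwoTerm

lemma coeff_qScale (q : ℂ) (f : AddMonoidAlgebra ℂ ℤ) (k : ℤ) :
    (qScale q f).coeff k = f.coeff k * q ^ k := by
  rw [qScale, coeff_finsuppSum, Finsupp.sum_apply, Finsupp.sum]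
  simp only [coeff_single, Finsupp.single_apply]
  rw [Finset.sum_ite_eq' f.coeff.support k (fun m => f.coeff m * q ^ m)]
  split_ifs with h
  · rfl
  · rw [Finsupp.notMem_support_iff.mp h, zero_mul]

lemma coeff_Dop (q : ℂ) (f : AddMonoidAlgebra ℂ ℤ) (k : ℤ) :
    (Dop q f).coeff k = f.coeff (k + 1) * (1 - q ^ (k + 1)) := by
  rw [Dop, coeff_single_mul_apply, one_mul, neg_neg, add_comm, coeff_sub, Finsupp.sub_apply,
    coeff_qScale, mul_one_sub]

lemma coeff_iterate_Dop (q : ℂ) (f : AddMonoidAlgebra ℂ ℤ) (ν : ℕ) (k : ℤ) :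
    ((Dop q)^[ν] f).coeff k = f.coeff (k + ν) * ∏ i ∈ Finset.range ν, (1 - q ^ (k + 1 + i)) := by
  induction ν generalizing k with
  | zero => simp
  | succ ν ih =>
    rw [Function.iterate_succ_apply', coeff_Dop, ih, Finset.prod_range_succ', mul_assoc]
    push_cast
    ring_nf

/-- `D_z^ν(x^n) = 2^{-n} (q^{n-ν+1};q)_ν z^{n-ν} + (lower order terms)`:
the difference `D_z^ν(x^n) - 2^{-n}(q^{n-ν+1};q)_ν z^{n-ν}` has zero coefficient of `z^k`
for every `k ≥ n - ν`, where `x = (z + z⁻¹)/2`. -/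
theorem Dop_iter_leading_coeff (q : ℂ) (hq : q ≠ 0) (n ν : ℕ) :
    ∀ k : ℤ, (n : ℤ) - ν ≤ k →
      ((Dop q)^[ν]
          (((AddMonoidAlgebra.single (1 : ℤ) (2⁻¹ : ℂ) + AddMonoidAlgebra.single (-1 : ℤ) (2⁻¹ : ℂ)) :
            AddMonoidAlgebra ℂ ℤ) ^ n) -
        AddMonoidAlgebra.single ((n : ℤ) - ν)
          ((2 : ℂ)⁻¹ ^ n * ∏ i ∈ Finset.range ν, (1 - q ^ ((n : ℤ) - ν + 1) * q ^ i))).coeff k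
        = 0 := by
  intro k hk
  rw [coeff_sub, Finsupp.sub_apply, coeff_iterate_Dop, coeff_single]
  obtain rfl | hlt := hk.eq_or_lt
  · rw [sub_add_cancel, coeff_pow_single_one_add_single_neg_one_self, Finsupp.single_eq_same,
      sub_eq_zero]
    congr 1
    refine Finset.prod_congr rfl fun i _ => ?_
    rw [zpow_add₀ hq, zpow_natCast]
  · rw [coeff_pow_single_one_add_single_neg_one_of_lt _ (by omega), zero_mul,
      Finsupp.single_eq_of_ne hlt.ne', sub_zero]
end

section
/- Let q ∈ (0,1) and suppose L = ∑_{ν ∈ S} C_ν(z) E_z^ν is a q-difference operator on functions on the d-torus with finite S ⊂ ℤ^d, where E_z^ν f(z) = f(z q^ν). Suppose for each ν ∈ S: (i) C_ν(z) w(z) = C_{-ν}(z q^ν) w(z q^ν) identically, and (ii) C_ν(z) w(z) is holomorphic on each torus T_t^ν = {z : |z_j| = q^{-t ν_j}} for all t ∈ [0,1]. Then L is self-adjoint with respect to the inner product ⟨f,g⟩ = (4πi)^{-d} ∫_T f(z) g(z) w(z) ∏_j dz_j/z_j on the unit torus T, i.e., ⟨Lf, g⟩ = ⟨f, Lg⟩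 for holomorphic f, g. -/
/-!
For each `ν ∈ S`, hypothesis (i) turns `⟨C_ν E^ν f, g⟩` into the integral of
`H = C_{-ν} w · f · E^{-ν} g` over the torus `|z_j| = q^{ν_j}`, and (ii) lets this contour be moved
back to the unit torus, which gives `⟨f, C_{-ν} E^{-ν} g⟩`; summing over `ν` and reindexing by
`ν ↦ -ν` yields `⟨Lf, g⟩ = ⟨f, Lg⟩`.

Holomorphy is only assumed on the tori `|z_j| = e^{t a_j}` (`a = ν log q`, `0 ≤ t ≤ 1`), so the
contour is moved along complex lines: for fixed `θ`, `τ ↦ (exp (a_j τ + i θ_j))_j` sends the strip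
`0 ≤ re τ ≤ 1` into that family and, because `a` is an integer vector times `log q`, is periodic in
`im τ` with some period `U`. Cauchy's theorem on the rectangle `[0,1] × [0,U]` equates the integrals
along its two vertical sides, and integrating over `θ` (Fubini, and translation invariance of
integrals of periodic functions over a period box) turns these into `U` times the two torus
integrals.
-/

open MeasureTheory Set Complex
open scoped Real

section PeriodicBox

variable {ι : Type*} [Fintype ι] {E : Type*} [NormedAddCommGroup E] {T : ℝ}

theorem measurePreserving_pi_coe_addCircle [Fact (0 < T)] :
    MeasurePreserving (fun (θ : ι → ℝ) j => (θ j : AddCircle T))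
      (volume.restrict (univ.pi fun _ => Icc 0 T)) volume := by
  have hae : (univ.pi fun _ : ι => Icc (0 : ℝ) T) =ᵐ[volume] univ.pi fun _ => Ioc 0 (0 + T) := by
    rw [volume_pi, zero_add]
    exact Measure.ae_eq_set_pi fun _ _ => Ioc_ae_eq_Icc.symm
  rw [Measure.restrict_congr_set hae, volume_pi, Measure.restrict_pi_pi]
  exact measurePreserving_pi _ _ fun _ => AddCircle.measurePreserving_mk T 0

theorem setIntegral_pi_Icc_comp_coe_addCircle [Fact (0 < T)] [NormedSpace ℝ E]
    {F : (ι → AddCircle T) → E} (hF : AEStronglyMeasurable F volume) :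
    ∫ θ in univ.pi fun _ => Icc 0 T, F (fun j => θ j) = ∫ ξ, F ξ := by
  have hΦ := measurePreserving_pi_coe_addCircle (ι := ι) (T := T)
  rw [← hΦ.map_eq] at hF ⊢
  exact (integral_map hΦ.measurable.aemeasurable hF).symm

theorem exists_comp_coe_addCircle_of_periodic (hT : 0 < T) {h : (ι → ℝ) → E} (hh : Continuous h)
    (hper : ∀ (m : ι → ℤ) θ, h (fun j => θ j + m j * T) = h θ) :
    ∃ F : (ι → AddCircle T) → E, StronglyMeasurable F ∧ ∀ θ, F (fun j => θ j) = h θ := by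
  have := Fact.mk hT
  refine ⟨fun ξ => h fun j => (AddCircle.equivIoc T 0 (ξ j) : ℝ), ?_, fun θ => ?_⟩
  · refine hh.comp_stronglyMeasurable (Measurable.stronglyMeasurable ?_)
    exact measurable_pi_lambda _ fun j =>
      measurable_subtype_coe.comp ((AddCircle.measurableEquivIoc T 0).measurable.comp
        (measurable_pi_apply j))
  · convert hper (fun j => -toIocDiv hT 0 (θ j)) θ using 2
    funext j
    simp only [AddCircle.equivIoc, QuotientAddGroup.equivIocMod_coe]
    rw [toIocMod]
    push_cast
    ring

theorem setIntegral_pi_Icc_comp_add_of_periodic [NormedSpace ℝ E] (hT : 0 < T)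
    {h : (ι → ℝ) → E} (hh : Continuous h)
    (hper : ∀ (m : ι → ℤ) θ, h (fun j => θ j + m j * T) = h θ) (c : ι → ℝ) :
    ∫ θ in univ.pi fun _ => Icc 0 T, h (θ + c) = ∫ θ in univ.pi fun _ => Icc 0 T, h θ := by
  have := Fact.mk hT
  obtain ⟨F, hFm, hF⟩ := exists_comp_coe_addCircle_of_periodic hT hh hper
  calc ∫ θ in univ.pi fun _ => Icc 0 T, h (θ + c)
      = ∫ θ in univ.pi fun _ => Icc 0 T,
          F ((fun j => (θ j : AddCircle T)) + fun j => (c j : AddCircle T)) := by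
        simp_rw [← hF]
        rfl
    _ = ∫ ξ, F (ξ + fun j => (c j : AddCircle T)) :=
        setIntegral_pi_Icc_comp_coe_addCircle
          (hFm.comp_measurable (measurable_add_const _)).aestronglyMeasurable
    _ = ∫ ξ, F ξ := integral_add_right_eq_self F _
    _ = ∫ θ in univ.pi fun _ => Icc 0 T, h θ := by
        simp_rw [← hF]
        exact (setIntegral_pi_Icc_comp_coe_addCircle hFm.aestronglyMeasurable).symm

theorem setIntegral_pi_Icc_intervalIntegral_comp_add_smul [NormedSpace ℝ E] [CompleteSpace E]
    (hT : 0 < T) {G : (ι → ℝ) → E} (hG : Continuous G)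
    (hper : ∀ (m : ι → ℤ) θ, G (fun j => θ j + m j * T) = G θ) (a : ι → ℝ) {U : ℝ} (hU : 0 ≤ U) :
    ∫ θ in univ.pi fun _ => Icc 0 T, ∫ y in 0..U, G (θ + y • a)
      = U • ∫ θ in univ.pi fun _ => Icc 0 T, G θ := by
  have hline : Continuous fun p : (ι → ℝ) × ℝ => G (p.1 + p.2 • a) := by fun_prop
  have hint : Integrable (Function.uncurry fun θ (y : ℝ) => G (θ + y • a))
      ((volume.restrict (univ.pi fun _ => Icc 0 T)).prod (volume.restrict (Ioc 0 U))) := by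
    rw [Measure.prod_restrict]
    exact (hline.continuousOn.integrableOn_compact
      ((isCompact_univ_pi fun _ => isCompact_Icc).prod isCompact_Icc)).mono_set
      (prod_mono subset_rfl Ioc_subset_Icc_self)
  simp_rw [intervalIntegral.integral_of_le hU]
  rw [integral_integral_swap hint]
  simp_rw [setIntegral_pi_Icc_comp_add_of_periodic hT hG hper]
  rw [setIntegral_const, Real.volume_real_Ioc_of_le hU, sub_zero]

end PeriodicBox

theorem integral_vertical_eq_of_differentiableOn_strip {E : Type*} [NormedAddCommGroup E]
    [NormedSpace ℂ E] [CompleteSpace E] {φ : ℂ → E} {U : ℝ}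
    (hφ : DifferentiableOn ℂ φ (re ⁻¹' Icc 0 1)) (hper : ∀ τ, φ (τ + U * I) = φ τ) :
    ∫ y in 0..U, φ (1 + y * I) = ∫ y in 0..U, φ (y * I) := by
  have hrect := integral_boundary_rect_eq_zero_of_differentiableOn φ 0 (1 + U * I)
    (hφ.mono fun τ hτ => by simpa using hτ.1)
  simp only [zero_im, ofReal_zero, zero_mul, add_zero, zero_re, add_re, one_re, mul_re, ofReal_re,
    I_re, mul_zero, ofReal_im, I_im, mul_one, sub_self, add_im, one_im, mul_im, zero_add, hper,
    ofReal_one] at hrect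
  rwa [← smul_sub, smul_eq_zero_iff_right I_ne_zero, sub_eq_zero] at hrect

section PolarPoint

variable {ι : Type*}

noncomputable def polarPoint (r θ : ι → ℝ) (j : ι) : ℂ := exp (r j + I * θ j)

theorem norm_polarPoint (r θ : ι → ℝ) (j : ι) : ‖polarPoint r θ j‖ = Real.exp (r j) := by
  simp [polarPoint, norm_exp]

theorem continuous_polarPoint (r : ι → ℝ) : Continuous (polarPoint r) := by
  unfold polarPoint
  fun_prop

theorem polarPoint_add_int_mul_two_pi (r θ : ι → ℝ) (m : ι → ℤ) :
    polarPoint r (fun j => θ j + m j * (2 * π)) = polarPoint r θ := by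
  funext j
  simp only [polarPoint]
  push_cast
  rw [show (r j : ℂ) + I * (θ j + m j * (2 * π)) = r j + I * θ j + m j * (2 * π * I) by ring,
    exp_add, exp_int_mul_two_pi_mul_I, mul_one]

variable [Fintype ι] {E : Type*} [NormedAddCommGroup E] [NormedSpace ℂ E] [CompleteSpace E]

theorem setIntegral_polarPoint_eq_of_commensurable {a : ι → ℝ} {U : ℝ} (hU : 0 < U)
    (hUa : ∀ j, ∃ m : ℤ, U * a j = m * (2 * π)) {H : (ι → ℂ) → E}
    (hH : DifferentiableOn ℂ H {z | ∃ t ∈ Icc (0 : ℝ) 1, ∀ j, ‖z j‖ = Real.exp (t * a j)}) :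
    ∫ θ in univ.pi fun _ => Icc 0 (2 * π), H (polarPoint a θ)
      = ∫ θ in univ.pi fun _ => Icc 0 (2 * π), H (polarPoint 0 θ) := by
  set G : ℝ → (ι → ℝ) → E := fun t θ => H (polarPoint (t • a) θ)
  have hGc : ∀ t ∈ Icc (0 : ℝ) 1, Continuous (G t) := fun t ht =>
    hH.continuousOn.comp_continuous (continuous_polarPoint _) fun θ =>
      ⟨t, ht, fun j => norm_polarPoint _ _ _⟩
  have hGper : ∀ t (m : ι → ℤ) θ, G t (fun j => θ j + m j * (2 * π)) = G t θ := fun t m θ => by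
    simp only [G, polarPoint_add_int_mul_two_pi]
  have hline : ∀ θ, ∫ y in 0..U, G 1 (θ + y • a) = ∫ y in 0..U, G 0 (θ + y • a) := by
    intro θ
    set φ : ℂ → E := fun τ => H (fun j => exp (a j * τ + I * θ j))
    have hG : ∀ t y : ℝ, G t (θ + y • a) = φ (t + y * I) := fun t y => by
      simp only [G, φ]
      congr 1
      funext j
      simp only [polarPoint, Pi.add_apply, Pi.smul_apply, smul_eq_mul]
      push_cast
      ring_nf
    have hφ : DifferentiableOn ℂ φ (re ⁻¹' Icc 0 1) := by
      refine hH.comp (by fun_prop : Differentiable ℂ _).differentiableOn fun τ hτ => ?_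
      exact ⟨τ.re, hτ, fun j => by simp [norm_exp, mul_comm]⟩
    choose m hm using hUa
    have hper : ∀ τ, φ (τ + U * I) = φ τ := fun τ => by
      simp only [φ]
      congr 1
      funext j
      have hmj : ((U * a j : ℝ) : ℂ) = m j * (2 * π) := by exact_mod_cast hm j
      push_cast at hmj
      rw [show (a j : ℂ) * (τ + U * I) + I * θ j = a j * τ + I * θ j + m j * (2 * π * I) by
          linear_combination I * hmj,
        exp_add, exp_int_mul_two_pi_mul_I, mul_one]
    calc ∫ y in 0..U, G 1 (θ + y • a) = ∫ y in 0..U, φ (1 + y * I) := by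
          simp only [hG, ofReal_one]
      _ = ∫ y in 0..U, φ (y * I) := integral_vertical_eq_of_differentiableOn_strip hφ hper
      _ = ∫ y in 0..U, G 0 (θ + y • a) := by simp only [hG, ofReal_zero, zero_add]
  have h1 := setIntegral_pi_Icc_intervalIntegral_comp_add_smul Real.two_pi_pos
    (hGc 1 ⟨zero_le_one, le_rfl⟩) (hGper 1) a hU.le
  have h0 := setIntegral_pi_Icc_intervalIntegral_comp_add_smul Real.two_pi_pos
    (hGc 0 ⟨le_rfl, zero_le_one⟩) (hGper 0) a hU.le
  simp_rw [hline] at h1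
  simpa [G] using smul_right_injective E hU.ne' (h1.symm.trans h0)

end PolarPoint

section QShift

variable {ι : Type*}

-- The paper's `E^ν` is `f ↦ f ∘ qShift q ν`.
noncomputable def qShift (q : ℝ) (ν : ι → ℤ) (z : ι → ℂ) (j : ι) : ℂ := z j * (q : ℂ) ^ ν j

theorem qShift_neg_qShift {q : ℝ} (hq : q ≠ 0) (ν : ι → ℤ) (z : ι → ℂ) :
    qShift q (-ν) (qShift q ν z) = z := by
  funext j
  simp [qShift, zpow_neg, zpow_ne_zero _ (ofReal_ne_zero.mpr hq)]

theorem qShift_exp_mul_I {q : ℝ} (hq : 0 < q) (ν : ι → ℤ) (θ : ι → ℝ) :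
    qShift q ν (fun j => exp (I * θ j)) = polarPoint (fun j => ν j * Real.log q) θ := by
  funext j
  rw [qShift, polarPoint, exp_add, mul_comm, ← ofReal_zpow, ← Real.rpow_intCast,
    Real.rpow_def_of_pos hq, ofReal_exp, mul_comm (Real.log q)]

variable [Fintype ι]

@[fun_prop]
theorem differentiable_qShift (q : ℝ) (ν : ι → ℤ) : Differentiable ℂ (qShift q ν) :=
  differentiable_pi.mpr fun j => (differentiable_apply j).mul_const _

@[fun_prop]
theorem continuous_qShift (q : ℝ) (ν : ι → ℤ) : Continuous (qShift q ν) :=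
  (differentiable_qShift q ν).continuous

variable {E : Type*} [NormedAddCommGroup E] [NormedSpace ℂ E] [CompleteSpace E]

theorem setIntegral_comp_qShift_eq {q : ℝ} (hq : 0 < q) (ν : ι → ℤ) {H : (ι → ℂ) → E}
    (hH : DifferentiableOn ℂ H {z | ∃ t ∈ Icc (0 : ℝ) 1, ∀ j, ‖z j‖ = q ^ (t * ν j)}) :
    ∫ θ in univ.pi fun _ => Icc 0 (2 * π), H (qShift q ν fun j => exp (I * θ j))
      = ∫ θ in univ.pi fun _ => Icc 0 (2 * π), H (fun j => exp (I * θ j)) := by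
  have hunit : ∀ θ : ι → ℝ, (fun j => exp (I * θ j)) = polarPoint 0 θ := fun θ => by
    funext j
    simp [polarPoint]
  simp only [qShift_exp_mul_I hq]
  simp only [hunit]
  rcases eq_or_ne (Real.log q) 0 with hlog | hlog
  · simp only [hlog, mul_zero]
    rfl
  obtain ⟨U, hU, hUa⟩ : ∃ U > 0, ∀ j, ∃ m : ℤ, U * (ν j * Real.log q) = m * (2 * π) := by
    refine ⟨2 * π / |Real.log q|, by positivity, fun j => ?_⟩
    rcases abs_choice (Real.log q) with h | h
    · exact ⟨ν j, by rw [h]; field_simp⟩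
    · exact ⟨-ν j, by rw [h]; push_cast; field_simp⟩
  refine setIntegral_polarPoint_eq_of_commensurable hU hUa ?_
  convert hH using 7 with z t j
  rw [Real.rpow_def_of_pos hq]
  ring_nf

theorem setIntegral_mul_qShift_transpose {q : ℝ} (hq : 0 < q) {ν : ι → ℤ}
    {A B f g : (ι → ℂ) → ℂ} (hAB : ∀ z, A z = B (qShift q ν z))
    (hB : DifferentiableOn ℂ B {z | ∃ t ∈ Icc (0 : ℝ) 1, ∀ j, ‖z j‖ = q ^ (t * ν j)})
    (hf : Differentiable ℂ f) (hg : Differentiable ℂ g) :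
    ∫ θ in univ.pi fun _ => Icc 0 (2 * π), A (fun j => exp (I * θ j)) *
        (f (qShift q ν fun j => exp (I * θ j)) * g (fun j => exp (I * θ j)))
      = ∫ θ in univ.pi fun _ => Icc 0 (2 * π), B (fun j => exp (I * θ j)) *
        (f (fun j => exp (I * θ j)) * g (qShift q (-ν) fun j => exp (I * θ j))) := by
  have hH : DifferentiableOn ℂ (fun z => B z * (f z * g (qShift q (-ν) z))) _ :=
    hB.mul (hf.differentiableOn.mul (hg.comp (differentiable_qShift q (-ν))).differentiableOn)
  simp only [hAB, ← setIntegral_comp_qShift_eq hq ν hH, qShift_neg_qShift hq.ne']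

end QShift

theorem selfadjoint_criterion_general (d : ℕ) (q : ℝ) (hq0 : 0 < q)
    (S : Finset (Fin d → ℤ)) (hS : ∀ ν ∈ S, -ν ∈ S)
    (C : (Fin d → ℤ) → (Fin d → ℂ) → ℂ) (w : (Fin d → ℂ) → ℂ)
    (hi : ∀ ν ∈ S, ∀ z : Fin d → ℂ,
      C ν z * w z =
        C (-ν) (fun j => z j * (q : ℂ) ^ (ν j)) * w (fun j => z j * (q : ℂ) ^ (ν j)))
    (hii : ∀ ν ∈ S, DifferentiableOn ℂ (fun z => C ν z * w z)
      {z : Fin d → ℂ | ∃ t ∈ Set.Icc (0 : ℝ) 1,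
        ∀ j, ‖z j‖ = q ^ (-(t * (ν j : ℝ)))})
    (f g : (Fin d → ℂ) → ℂ) (hf : Differentiable ℂ f) (hg : Differentiable ℂ g) :
    let e : (Fin d → ℝ) → (Fin d → ℂ) := fun θ j => Complex.exp (Complex.I * θ j)
    let L : ((Fin d → ℂ) → ℂ) → ((Fin d → ℂ) → ℂ) :=
      fun h z => ∑ ν ∈ S, C ν z * h (fun j => z j * (q : ℂ) ^ (ν j))
    let inner : ((Fin d → ℂ) → ℂ) → ((Fin d → ℂ) → ℂ) → ℂ :=
      fun h₁ h₂ => (1 / (4 * Real.pi) ^ d : ℂ) *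
        ∫ θ in Set.pi Set.univ (fun _ : Fin d => Set.Icc (0 : ℝ) (2 * Real.pi)),
          h₁ (e θ) * h₂ (e θ) * w (e θ)
    inner (L f) g = inner f (L g) := by
  intro e L inner
  set box := univ.pi fun _ : Fin d => Icc (0 : ℝ) (2 * π)
  have hfc := hf.continuous
  have hgc := hg.continuous
  have hint : ∀ ν ∈ S, ∀ F : (Fin d → ℂ) → ℂ, Continuous F →
      IntegrableOn (fun θ => C ν (e θ) * w (e θ) * F (e θ)) box := fun ν hν F hF =>
    (((hii ν hν).continuousOn.comp_continuous (by fun_prop) fun θ =>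
        ⟨0, ⟨le_rfl, zero_le_one⟩, fun j => by simp [e, norm_exp]⟩).mul
      (hF.comp (by fun_prop))).continuousOn.integrableOn_compact
      (isCompact_univ_pi fun _ => isCompact_Icc)
  show (1 / (4 * π) ^ d : ℂ) *
      ∫ θ in box, (∑ ν ∈ S, C ν (e θ) * f (qShift q ν (e θ))) * g (e θ) * w (e θ)
    = (1 / (4 * π) ^ d : ℂ) *
      ∫ θ in box, f (e θ) * (∑ ν ∈ S, C ν (e θ) * g (qShift q ν (e θ))) * w (e θ)
  congr 1
  calc ∫ θ in box, (∑ ν ∈ S, C ν (e θ) * f (qShift q ν (e θ))) * g (e θ) * w (e θ)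
      = ∫ θ in box, ∑ ν ∈ S, C ν (e θ) * w (e θ) * (f (qShift q ν (e θ)) * g (e θ)) := by
        congr 1 with θ
        rw [Finset.sum_mul, Finset.sum_mul]
        exact Finset.sum_congr rfl fun _ _ => by ring
    _ = ∑ ν ∈ S, ∫ θ in box, C ν (e θ) * w (e θ) * (f (qShift q ν (e θ)) * g (e θ)) :=
        integral_finsetSum _ fun ν hν => hint ν hν (fun z => f (qShift q ν z) * g z) (by fun_prop)
    _ = ∑ ν ∈ S, ∫ θ in box, C (-ν) (e θ) * w (e θ) * (f (e θ) * g (qShift q (-ν) (e θ))) :=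
        Finset.sum_congr rfl fun ν hν => setIntegral_mul_qShift_transpose hq0 (hi ν hν)
          (by simpa using hii (-ν) (hS ν hν)) hf hg
    _ = ∑ ν ∈ S, ∫ θ in box, C ν (e θ) * w (e θ) * (f (e θ) * g (qShift q ν (e θ))) :=
        Finset.sum_nbij' (- ·) (- ·) hS hS (by simp) (by simp) (by simp)
    _ = ∫ θ in box, ∑ ν ∈ S, C ν (e θ) * w (e θ) * (f (e θ) * g (qShift q ν (e θ))) :=
        (integral_finsetSum _ fun ν hν =>
          hint ν hν (fun z => f z * g (qShift q ν z)) (by fun_prop)).symm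
    _ = ∫ θ in box, f (e θ) * (∑ ν ∈ S, C ν (e θ) * g (qShift q ν (e θ))) * w (e θ) := by
        congr 1 with θ
        rw [Finset.mul_sum, Finset.sum_mul]
        exact Finset.sum_congr rfl fun _ _ => by ring

/-- Self-adjointness criterion (Lemma 4.1): if `L = ∑_{ν ∈ S} C_ν(z) E_z^ν` satisfies
(i) `C_ν(z) w(z) = C_{-ν}(zq^ν) w(zq^ν)` and (ii) `C_ν(z) w(z)` is holomorphic on each
torus `T_t^ν = {z : |z_j| = q^{-t ν_j}}`, `t ∈ [0,1]`, then `L` is self-adjoint for the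
inner product `⟨f,g⟩ = (4πi)^{-d} ∫_T f g w ∏_j dz_j/z_j` on the unit torus, here written
in the angular parametrization `z_j = e^{iθ_j}`. -/
theorem selfadjoint_criterion (d : ℕ) (q : ℝ) (hq0 : 0 < q) (hq1 : q < 1)
    (S : Finset (Fin d → ℤ)) (hS : ∀ ν ∈ S, -ν ∈ S)
    (C : (Fin d → ℤ) → (Fin d → ℂ) → ℂ) (w : (Fin d → ℂ) → ℂ)
    (hi : ∀ ν ∈ S, ∀ z : Fin d → ℂ,
      C ν z * w z =
        C (-ν) (fun j => z j * (q : ℂ) ^ (ν j)) * w (fun j => z j * (q : ℂ) ^ (ν j)))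
    (hii : ∀ ν ∈ S, DifferentiableOn ℂ (fun z => C ν z * w z)
      {z : Fin d → ℂ | ∃ t ∈ Set.Icc (0 : ℝ) 1,
        ∀ j, ‖z j‖ = q ^ (-(t * (ν j : ℝ)))})
    (f g : (Fin d → ℂ) → ℂ) (hf : Differentiable ℂ f) (hg : Differentiable ℂ g) :
    let e : (Fin d → ℝ) → (Fin d → ℂ) := fun θ j => Complex.exp (Complex.I * θ j)
    let L : ((Fin d → ℂ) → ℂ) → ((Fin d → ℂ) → ℂ) :=
      fun h z => ∑ ν ∈ S, C ν z * h (fun j => z j * (q : ℂ) ^ (ν j))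
    let inner : ((Fin d → ℂ) → ℂ) → ((Fin d → ℂ) → ℂ) → ℂ :=
      fun h₁ h₂ => (1 / (4 * Real.pi) ^ d : ℂ) *
        ∫ θ in Set.pi Set.univ (fun _ : Fin d => Set.Icc (0 : ℝ) (2 * Real.pi)),
          h₁ (e θ) * h₂ (e θ) * w (e θ)
    inner (L f) g = inner f (L g) :=
  selfadjoint_criterion_general d q hq0 S hS C w hi hii f g hf hg
end
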